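/- Let ρ_BC be a bipartite density matrix with spectral decomposition ρ_BC = ∑_i q_i |i_BC⟩⟨i_BC|, q_i > 0, ⟨i|j⟩ = δ_ij. If Tr_B |i_BC⟩⟨j_BC| = δ_ij ρ_C for all i,j, then S(ρ_BC) + S(ρ_C) − S(ρ_B) = 0, i.e. the Araki–Lieb inequality is saturated. -/

import Mathlib

open Matrix Kronecker ComplexOrder

/-- Von Neumann entropy `S(ρ) = -Tr(ρ ln ρ)`, computed via eigenvalues. -/
noncomputable def vN {n : Type} [Fintype n] [DecidableEq n] (ρ : Matrix n n ℂ) : ℝ :=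
  if h : ρ.IsHermitian then -∑ i, h.eigenvalues i * Real.log (h.eigenvalues i) else 0

/-- A density matrix: positive semidefinite with unit trace. -/
def IsDensity {n : Type} [Fintype n] (ρ : Matrix n n ℂ) : Prop :=
  ρ.PosSemidef ∧ ρ.trace = 1

/-- Partial trace over the left tensor factor. -/
noncomputable def ptraceLeft {a b : Type} [Fintype a] [Fintype b]
    (M : Matrix (a × b) (a × b) ℂ) : Matrix b b ℂ :=
  Matrix.of fun i j => ∑ k, M (k, i) (k, j)

/-- Partial trace over the right tensor factor. -/
noncomputable def ptraceRight {a b : Type} [Fintype a] [Fintype b]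
    (M : Matrix (a × b) (a × b) ℂ) : Matrix a a ℂ :=
  Matrix.of fun i j => ∑ k, M (i, k) (j, k)

/-!
Write `ρ = ∑ᵢ qᵢ |vᵢ⟩⟨vᵢ|` and read each `vᵢ` as a `B × C` matrix `Vᵢ`. The hypothesis on the
off-diagonal partial traces says `Vⱼᴴ Vᵢ = δᵢⱼ ρ_Cᵀ`; after rotating `C` by a unitary that
diagonalises `ρ_Cᵀ`, the columns of all the `Vᵢ` are therefore pairwise orthogonal, with squared
norms the eigenvalues `λₖ` of `ρ_C`. Hence `ρ_B = ∑ᵢ qᵢ Vᵢ Vᵢᴴ` has nonzero spectrum `{qᵢ λₖ}`, and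
the Shannon entropy of this product distribution is `H(q) + H(λ) = S(ρ_BC) + S(ρ_C)`.

Spectra are read off through the nonzero eigenvalues of `M Mᴴ`, which are those of `Mᴴ M`
(`Matrix.charpoly_mul_comm'`); for an orthogonal family the latter matrix is diagonal.
-/

open Polynomial in
theorem Matrix.IsHermitian.sum_eigenvalues_eq_of_conjTranspose_mul_eq_diagonal
    {m n : Type} [Fintype m] [DecidableEq m] [Fintype n] [DecidableEq n]
    {A : Matrix m m ℂ} (hA : A.IsHermitian) (M : Matrix m n ℂ) (hAM : A = M * Mᴴ)
    (d : n → ℝ) (hd : Mᴴ * M = diagonal fun i => (d i : ℂ)) (g : ℝ → ℝ) (hg : g 0 = 0) :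
    ∑ i, g (hA.eigenvalues i) = ∑ i, g (d i) := by
  have hroots : Fintype.card m • {0} + Finset.univ.val.map (fun i => (d i : ℂ)) =
      Fintype.card n • {0} + Finset.univ.val.map (fun i => (hA.eigenvalues i : ℂ)) := by
    have h := congrArg roots (charpoly_mul_comm' Mᴴ M)
    rw [hd, ← hAM, charpoly_diagonal, roots_mul, roots_mul, roots_X_pow, roots_X_pow,
      roots_prod, hA.roots_charpoly_eq_eigenvalues] at h
    · simpa using h
    all_goals simp [Finset.prod_ne_zero_iff, X_sub_C_ne_zero, (charpoly_monic _).ne_zero]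
  simpa [hg, Multiset.map_nsmul, Multiset.sum_nsmul] using
    (congrArg (fun s => (s.map fun z => g z.re).sum) hroots).symm

noncomputable def weightedColumns {n ι : Type} (q : ι → ℝ) (u : ι → n → ℂ) : Matrix n ι ℂ :=
  of fun x i => (√(q i) : ℂ) * u i x

theorem weightedColumns_mul_conjTranspose {n ι : Type} [Fintype ι] {q : ι → ℝ}
    (hq : ∀ i, 0 ≤ q i) (u : ι → n → ℂ) :
    weightedColumns q u * (weightedColumns q u)ᴴ =
      ∑ i, q i • of fun x y => u i x * star (u i y) := by
  ext x y
  simp only [weightedColumns, mul_apply, conjTranspose_apply, of_apply, Matrix.sum_apply,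
    Matrix.smul_apply, star_mul', RCLike.star_def, Complex.conj_ofReal, Complex.real_smul]
  refine Finset.sum_congr rfl fun i _ => ?_
  have hsq : (√(q i) : ℂ) * √(q i) = q i := by exact_mod_cast Real.mul_self_sqrt (hq i)
  linear_combination u i x * (starRingEnd ℂ) (u i y) * hsq

theorem conjTranspose_mul_weightedColumns {n ι : Type} [Fintype n] [DecidableEq ι] {q : ι → ℝ}
    (hq : ∀ i, 0 ≤ q i) {u : ι → n → ℂ} {c : ι → ℝ}
    (hu : ∀ i j, ∑ x, star (u i x) * u j x = if i = j then (c i : ℂ) else 0) :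
    (weightedColumns q u)ᴴ * weightedColumns q u = diagonal fun i => ((q i * c i : ℝ) : ℂ) := by
  ext i j
  have hsq : (√(q i) : ℂ) * √(q i) = q i := by exact_mod_cast Real.mul_self_sqrt (hq i)
  calc ∑ x, star ((√(q i) : ℂ) * u i x) * ((√(q j) : ℂ) * u j x)
      = (√(q i) : ℂ) * √(q j) * ∑ x, star (u i x) * u j x := by
        simp only [Finset.mul_sum, star_mul', Complex.star_def, Complex.conj_ofReal]
        exact Finset.sum_congr rfl fun x _ => by ring
    _ = (diagonal fun i => ((q i * c i : ℝ) : ℂ)) i j := by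
        rw [hu, diagonal_apply]
        split_ifs with hij
        · subst hij
          push_cast
          linear_combination (c i : ℂ) * hsq
        · simp

theorem Matrix.IsHermitian.sum_eigenvalues_eq_of_eq_sum_smul_outer {n ι : Type} [Fintype n]
    [DecidableEq n] [Fintype ι] [DecidableEq ι] {A : Matrix n n ℂ} (hA : A.IsHermitian)
    {q : ι → ℝ} (hq : ∀ i, 0 ≤ q i) {u : ι → n → ℂ} {c : ι → ℝ}
    (hu : ∀ i j, ∑ x, star (u i x) * u j x = if i = j then (c i : ℂ) else 0)
    (hA_eq : A = ∑ i, q i • of fun x y => u i x * star (u i y)) (g : ℝ → ℝ) (hg : g 0 = 0) :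
    ∑ k, g (hA.eigenvalues k) = ∑ i, g (q i * c i) :=
  hA.sum_eigenvalues_eq_of_conjTranspose_mul_eq_diagonal _
    (hA_eq.trans (weightedColumns_mul_conjTranspose hq u).symm) _
    (conjTranspose_mul_weightedColumns hq hu) g hg

theorem Matrix.IsHermitian.sum_eigenvalues_eq_one {n : Type} [Fintype n] [DecidableEq n]
    {A : Matrix n n ℂ} (hA : A.IsHermitian) (htr : A.trace = 1) : ∑ i, hA.eigenvalues i = 1 := by
  simpa [htr] using (congrArg Complex.re hA.trace_eq_sum_eigenvalues).symm

theorem Matrix.IsHermitian.exists_unitary_conjTranspose_mul_mul_eq_diagonal {n : Type} [Fintype n]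
    [DecidableEq n] {A : Matrix n n ℂ} (hA : A.IsHermitian) :
    ∃ U : Matrix n n ℂ, U * Uᴴ = 1 ∧ Uᴴ * A * U = diagonal fun k => (hA.eigenvalues k : ℂ) :=
  ⟨hA.eigenvectorUnitary, by simp [← star_eq_conjTranspose], by
    simpa [Unitary.conjStarAlgAut_star_apply, star_eq_conjTranspose, Function.comp_def] using
      hA.conjStarAlgAut_star_eigenvectorUnitary⟩

theorem mul_conjTranspose_eq_sum_outer {a b : Type} [Fintype b] (N : Matrix a b ℂ) :
    N * Nᴴ = ∑ k, of fun x y => N x k * star (N y k) := by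
  ext x y
  simp [mul_apply, Matrix.sum_apply]

theorem sum_smul_mul_conjTranspose_eq_sum_smul_outer {a b ι : Type} [Fintype b] [DecidableEq b]
    [Fintype ι] (q : ι → ℝ) (V : ι → Matrix a b ℂ) {U : Matrix b b ℂ} (hU : U * Uᴴ = 1) :
    ∑ i, q i • (V i * (V i)ᴴ) =
      ∑ p : ι × b, q p.1 • of fun x y => (V p.1 * U) x p.2 * star ((V p.1 * U) y p.2) := by
  rw [Fintype.sum_prod_type]
  refine Finset.sum_congr rfl fun i _ => ?_
  have hrot : V i * (V i)ᴴ = V i * U * (V i * U)ᴴ := by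
    rw [conjTranspose_mul, Matrix.mul_assoc, ← Matrix.mul_assoc U, hU, Matrix.one_mul]
  rw [hrot, mul_conjTranspose_eq_sum_outer, Finset.smul_sum]

theorem sum_star_mul_col_eq_of_conjTranspose_mul_eq_diagonal {a b ι : Type} [Fintype a]
    [Fintype b] [DecidableEq b] [DecidableEq ι] {Q U : Matrix b b ℂ} {d : b → ℝ}
    (hU : Uᴴ * Q * U = diagonal fun k => (d k : ℂ))
    {V : ι → Matrix a b ℂ} (hV : ∀ i j, (V j)ᴴ * V i = (if i = j then (1 : ℂ) else 0) • Q)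
    (p p' : ι × b) :
    ∑ x, star ((V p.1 * U) x p.2) * (V p'.1 * U) x p'.2 = if p = p' then (d p.2 : ℂ) else 0 := by
  have hgram : (V p.1 * U)ᴴ * (V p'.1 * U) =
      (if p'.1 = p.1 then (1 : ℂ) else 0) • diagonal fun k => (d k : ℂ) := by
    rw [← hU, conjTranspose_mul, Matrix.mul_assoc, ← Matrix.mul_assoc (V p.1)ᴴ, hV,
      Matrix.smul_mul, Matrix.mul_smul, Matrix.mul_assoc]
  have h := congrFun (congrFun hgram p.2) p'.2
  rw [mul_apply] at h
  simp only [conjTranspose_apply, Matrix.smul_apply, diagonal_apply] at h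
  rw [h]
  by_cases h₁ : p.1 = p'.1
  · by_cases h₂ : p.2 = p'.2 <;> simp [h₁, h₂, Prod.ext_iff]
  · simp [h₁, Ne.symm h₁, Prod.ext_iff]

theorem Matrix.IsHermitian.ptraceLeft {a b : Type} [Fintype a] [Fintype b]
    {M : Matrix (a × b) (a × b) ℂ} (hM : M.IsHermitian) : (ptraceLeft M).IsHermitian := by
  ext y y'
  simp only [conjTranspose_apply, _root_.ptraceLeft, of_apply, star_sum]
  exact Finset.sum_congr rfl fun x _ => hM.apply (x, y) (x, y')

theorem Matrix.IsHermitian.ptraceRight {a b : Type} [Fintype a] [Fintype b]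
    {M : Matrix (a × b) (a × b) ℂ} (hM : M.IsHermitian) : (ptraceRight M).IsHermitian := by
  ext x x'
  simp only [conjTranspose_apply, _root_.ptraceRight, of_apply, star_sum]
  exact Finset.sum_congr rfl fun y _ => hM.apply (x, y) (x', y)

theorem trace_ptraceLeft {a b : Type} [Fintype a] [Fintype b] (M : Matrix (a × b) (a × b) ℂ) :
    (ptraceLeft M).trace = M.trace := by
  simp only [trace, diag, ptraceLeft, of_apply, Fintype.sum_prod_type]
  exact Finset.sum_comm

theorem ptraceLeft_outer {a b : Type} [Fintype a] [Fintype b] (u w : a × b → ℂ) :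
    ptraceLeft (of fun x y => u x * star (w y)) =
      ((of (Function.curry w))ᴴ * of (Function.curry u))ᵀ := by
  ext y y'
  simp [ptraceLeft, mul_apply, mul_comm]

theorem ptraceRight_sum_smul_outer {a b ι : Type} [Fintype a] [Fintype b] [Fintype ι]
    (q : ι → ℝ) (u : ι → a × b → ℂ) :
    ptraceRight (∑ i, q i • of fun x y => u i x * star (u i y)) =
      ∑ i, q i • (of (Function.curry (u i)) * (of (Function.curry (u i)))ᴴ) := by
  ext x x'
  simp only [ptraceRight, Matrix.sum_apply, Matrix.smul_apply, of_apply, mul_apply,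
    conjTranspose_apply, Function.curry_apply, Finset.smul_sum]
  exact Finset.sum_comm

theorem vN_eq_sum_negMulLog {n : Type} [Fintype n] [DecidableEq n] {A : Matrix n n ℂ}
    (hA : A.IsHermitian) : vN A = ∑ i, Real.negMulLog (hA.eigenvalues i) := by
  simp [vN, hA, Real.negMulLog, Finset.sum_neg_distrib]

theorem sum_negMulLog_mul {ι κ : Type} [Fintype ι] [Fintype κ] {p : ι → ℝ} {r : κ → ℝ}
    (hp : ∑ i, p i = 1) (hr : ∑ k, r k = 1) :
    ∑ x : ι × κ, Real.negMulLog (p x.1 * r x.2) =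
      ∑ i, Real.negMulLog (p i) + ∑ k, Real.negMulLog (r k) := by
  simp only [Real.negMulLog_mul, Fintype.sum_prod_type, Finset.sum_add_distrib, ← Finset.sum_mul,
    ← Finset.mul_sum, hp, hr, one_mul]

/-- If the eigenvectors of `ρ_BC` satisfy `Tr_B |i⟩⟨j| = δ_ij ρ_C`, then the Araki–Lieb
inequality is saturated: `S(ρ_BC) + S(ρ_C) − S(ρ_B) = 0`. -/
theorem offdiagonal_implies_arakiLieb_saturation {B C ι : Type} [Fintype B] [DecidableEq B]
    [Fintype C] [DecidableEq C] [Fintype ι] [DecidableEq ι]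
    (ρ : Matrix (B × C) (B × C) ℂ) (hρ : IsDensity ρ)
    (q : ι → ℝ) (v : ι → (B × C → ℂ))
    (hq : ∀ i, 0 < q i)
    (honb : ∀ i j, ∑ x, star (v i x) * v j x = if i = j then (1 : ℂ) else 0)
    (hdecomp : ρ = ∑ i, q i • Matrix.of fun x y => v i x * star (v i y))
    (hoff : ∀ i j, ptraceLeft (Matrix.of fun x y => v i x * star (v j y))
              = (if i = j then (1 : ℂ) else 0) • ptraceLeft ρ) :
    vN ρ + vN (ptraceLeft ρ) - vN (ptraceRight ρ) = 0 := by
  obtain ⟨⟨hρH, -⟩, htr⟩ := hρ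
  have hq_nonneg : ∀ i, 0 ≤ q i := fun i => (hq i).le
  have hρ_eig := hρH.sum_eigenvalues_eq_of_eq_sum_smul_outer hq_nonneg (c := 1)
    (by simpa using honb) hdecomp
  have hCH := hρH.ptraceLeft
  have hQ := hCH.transpose
  obtain ⟨U, hUU, hUQU⟩ := hQ.exists_unitary_conjTranspose_mul_mul_eq_diagonal
  have hV : ∀ i j, (of (Function.curry (v j)))ᴴ * of (Function.curry (v i)) =
      (if i = j then (1 : ℂ) else 0) • (ptraceLeft ρ)ᵀ := fun i j => by
    rw [← transpose_transpose (_ * _), ← ptraceLeft_outer, hoff, transpose_smul]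
  have hBH := hρH.ptraceRight
  have hB_eig := hBH.sum_eigenvalues_eq_of_eq_sum_smul_outer (fun p => hq_nonneg p.1)
    (sum_star_mul_col_eq_of_conjTranspose_mul_eq_diagonal hUQU hV)
    (by rw [hdecomp, ptraceRight_sum_smul_outer,
      sum_smul_mul_conjTranspose_eq_sum_smul_outer _ _ hUU])
  have hCQ : hCH.eigenvalues = hQ.eigenvalues :=
    (hCH.eigenvalues_eq_eigenvalues_iff hQ).mpr (charpoly_transpose _).symm
  have hsum_q : ∑ i, q i = 1 := by
    simpa using (hρ_eig id rfl).symm.trans (hρH.sum_eigenvalues_eq_one htr)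
  have hsum_eig : ∑ k, hQ.eigenvalues k = 1 :=
    hQ.sum_eigenvalues_eq_one (by rw [trace_transpose, trace_ptraceLeft, htr])
  rw [vN_eq_sum_negMulLog hρH, vN_eq_sum_negMulLog hCH, vN_eq_sum_negMulLog hBH,
    hρ_eig _ Real.negMulLog_zero, hB_eig _ Real.negMulLog_zero, hCQ,
    sum_negMulLog_mul hsum_q hsum_eig]
  simp only [Pi.one_apply, mul_one, sub_self]
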